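/- For every positive integer n, the function x ↦ ψ^(2n-2)(e^x) is concave on ℝ, where ψ^(0) = ψ is the digamma function and ψ^(k) its k-th derivative. (In particular for n = 1 the function ψ(e^x) is concave.) -/

import Mathlib

noncomputable def digamma : ℝ → ℝ := deriv (fun x => Real.log (Real.Gamma x))

noncomputable def polygamma (i : ℕ) : ℝ → ℝ := iteratedDeriv i digamma

/-!
Put `y = eˣ`. Then `(ψ^(m) ∘ exp)'' = eˣ (ψ^(m+1)(y) + y ψ^(m+2)(y))`, and differentiating the Gauss
product for `log Γ` termwise gives, for even `m`, `ψ^(m+1) = (m+1)! ζ(m+2, ·)` and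
`ψ^(m+2) = -(m+2)! ζ(m+3, ·)`, where `ζ(q, y) = ∑ₖ (y+k)^(-q)`. Concavity thus reduces to
`ζ(q, y) ≤ q y ζ(q+1, y)` for `q ≥ 2`, which follows by comparing both sums with
`∫_y^∞ t^(-q) dt`: bounding each term by the integral over the preceding unit interval gives
`ζ(q, y) ≤ y^(-q) + y^(1-q)/(q-1)`, and the trapezoid rule for the convex `t^(-q-1)` gives
`ζ(q+1, y) ≥ y^(-q-1)/2 + y^(-q)/q`.
-/

open Real Filter Set Topology

noncomputable def hurwitzSum (q : ℕ) (y : ℝ) : ℝ := ∑' k : ℕ, ((y + k) ^ q)⁻¹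

noncomputable def digammaSeries (y : ℝ) : ℝ :=
  -eulerMascheroniConstant + ∑' k : ℕ, (((k : ℝ) + 1)⁻¹ - (y + k)⁻¹)

lemma summable_inv_add_pow {y : ℝ} (hy : 0 < y) {q : ℕ} (hq : 2 ≤ q) :
    Summable fun k : ℕ => ((y + k) ^ q)⁻¹ := by
  have := (Real.summable_one_div_nat_add_rpow y q).2 (by exact_mod_cast hq)
  refine this.congr fun k => ?_
  rw [abs_of_pos (by positivity), rpow_natCast, one_div, add_comm]

lemma hasDerivAt_inv_add_pow (c : ℝ) (q : ℕ) {y : ℝ} (hy : y + c ≠ 0) :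
    HasDerivAt (fun z => ((z + c) ^ q)⁻¹) (-q * ((y + c) ^ (q + 1))⁻¹) y := by
  refine ((((hasDerivAt_id' y).add_const c).fun_pow q).inv (pow_ne_zero q hy)).congr_deriv ?_
  rcases q with _ | p
  · simp
  · rw [Nat.add_sub_cancel]
    field_simp
    ring

lemma add_natCast_pos {y : ℝ} (hy : 0 < y) (k : ℕ) : 0 < y + k :=
  add_pos_of_pos_of_nonneg hy k.cast_nonneg

lemma hasDerivAt_hurwitzSum {q : ℕ} (hq : 2 ≤ q) {x : ℝ} (hx : 0 < x) :
    HasDerivAt (hurwitzSum q) (-q * hurwitzSum (q + 1) x) x := by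
  have hpos : ∀ y ∈ Ioi (x / 2), ∀ k : ℕ, 0 < y + k := fun y hy =>
    add_natCast_pos ((half_pos hx).trans hy)
  have h := hasDerivAt_tsum_of_isPreconnected (g := fun (k : ℕ) (z : ℝ) => ((z + k) ^ q)⁻¹)
    (g' := fun k z => -(q : ℝ) * ((z + k) ^ (q + 1))⁻¹)
    ((summable_inv_add_pow (half_pos hx) (by omega : 2 ≤ q + 1)).mul_left (q : ℝ)) isOpen_Ioi
    isPreconnected_Ioi (fun k y hy => hasDerivAt_inv_add_pow _ _ (hpos y hy k).ne')
    (fun k y hy => ?_) (half_lt_self hx) (summable_inv_add_pow hx hq) (half_lt_self hx)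
  · rw [tsum_mul_left] at h
    exact h
  · rw [norm_mul, norm_neg, Real.norm_natCast, norm_inv, norm_pow,
      Real.norm_of_nonneg (hpos y hy k).le]
    gcongr
    exact hy.le

lemma hasDerivAt_digammaSeries {x : ℝ} (hx : 0 < x) :
    HasDerivAt digammaSeries (hurwitzSum 2 x) x := by
  obtain ⟨a, ha, hax⟩ := exists_between (lt_min one_pos hx)
  have hpos : ∀ y ∈ Ioi a, ∀ k : ℕ, 0 < y + k := fun y hy => add_natCast_pos (ha.trans hy)
  -- the series is summable at `y = 1`, where every term vanishes
  have h := hasDerivAt_tsum_of_isPreconnected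
    (g := fun (k : ℕ) (z : ℝ) => ((k : ℝ) + 1)⁻¹ - (z + k)⁻¹) (g' := fun k z => ((z + k) ^ 2)⁻¹)
    (t := Ioi a) (y₀ := 1) (summable_inv_add_pow ha le_rfl) isOpen_Ioi isPreconnected_Ioi
    (fun k y hy => ?_) (fun k y hy => ?_) (lt_min_iff.1 hax).1 (by simp [add_comm])
    (lt_min_iff.1 hax).2
  · exact h.const_add _
  · simpa using (hasDerivAt_inv_add_pow (k : ℝ) 1 (hpos y hy k).ne').const_sub _
  · rw [norm_inv, norm_pow, Real.norm_of_nonneg (hpos y hy k).le]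
    gcongr
    exact hy.le

lemma abs_inv_succ_sub_inv_add_le {a y : ℝ} (ha : 0 < a) (ha1 : a ≤ 1) (hy : a < y) (k : ℕ) :
    |((k : ℝ) + 1)⁻¹ - (y + k)⁻¹| ≤ |y - 1| * ((a + k) ^ 2)⁻¹ := by
  have hak : 0 < a + k := add_natCast_pos ha k
  have hyk : 0 < y + k := add_natCast_pos (ha.trans hy) k
  have hprod : (a + k) ^ 2 ≤ (k + 1) * (y + k) := by
    rw [sq]; exact mul_le_mul (by linarith) (by linarith) hak.le (by positivity)
  rw [inv_sub_inv (by positivity) hyk.ne', abs_div, abs_of_pos (by positivity : (0 : ℝ) < _ * _),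
    show y + k - (k + 1) = y - 1 by ring, div_eq_mul_inv]
  gcongr

lemma tendsto_log_sub_sum_inv_succ :
    Tendsto (fun N : ℕ => log N - ∑ k ∈ Finset.range (N + 1), ((k : ℝ) + 1)⁻¹) atTop
      (𝓝 (-eulerMascheroniConstant)) := by
  have h := ((tendsto_harmonic_sub_log.comp (tendsto_add_atTop_nat 1)).add
    tendsto_log_nat_add_one_sub_log).neg
  simp only [add_zero] at h
  refine h.congr fun N => ?_
  simp [harmonic]

lemma hasDerivAt_logGammaSeq (N : ℕ) {y : ℝ} (hy : 0 < y) :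
    HasDerivAt (fun z => BohrMollerup.logGammaSeq z N)
      (log N - ∑ k ∈ Finset.range (N + 1), (y + k)⁻¹) y := by
  have h := HasDerivAt.fun_sum (u := Finset.range (N + 1))
    fun k _ => (hasDerivAt_id' y).add_const (k : ℝ) |>.log (add_natCast_pos hy k).ne'
  have h' := ((hasDerivAt_mul_const (log N)).add_const (log N.factorial)).sub h
  simp only [one_div] at h'
  exact h'

lemma hasDerivAt_log_Gamma {x : ℝ} (hx : 0 < x) :
    HasDerivAt (fun y => log (Gamma y)) (digammaSeries x) x := by
  obtain ⟨a, ha, hax⟩ := exists_between (lt_min one_pos hx)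
  obtain ⟨ha1, hax⟩ := lt_min_iff.1 hax
  have hbound : ∀ (k : ℕ), ∀ y ∈ Ioo a (x + 1),
      ‖((k : ℝ) + 1)⁻¹ - (y + k)⁻¹‖ ≤ (x + 1) * ((a + k) ^ 2)⁻¹ := fun k y hy => by
    refine (abs_inv_succ_sub_inv_add_le ha ha1.le hy.1 k).trans ?_
    gcongr
    rw [abs_le]
    constructor <;> linarith [hy.1, hy.2]
  have hseries := tendstoUniformlyOn_tsum_nat ((summable_inv_add_pow ha le_rfl).mul_left (x + 1))
    hbound
  -- the derivative of the `N`-th Gauss approximant is `(log N - H (N + 1))` plus a partial sum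
  have hderiv : TendstoUniformlyOn
      (fun (N : ℕ) (y : ℝ) => log N - ∑ k ∈ Finset.range (N + 1), (y + k)⁻¹)
      digammaSeries atTop (Ioo a (x + 1)) := by
    refine ((tendsto_log_sub_sum_inv_succ.tendstoUniformlyOn_const _).add
      (fun u hu => (tendsto_add_atTop_nat 1).eventually (hseries u hu))).congr ?_
    filter_upwards with N y _
    simp only [Pi.add_apply, Finset.sum_sub_distrib]
    ring
  exact hasDerivAt_of_tendstoUniformlyOn isOpen_Ioo hderiv
    (.of_forall fun N y hy => hasDerivAt_logGammaSeq N (ha.trans hy.1))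
    (fun y hy => BohrMollerup.tendsto_log_gamma (ha.trans hy.1)) ⟨hax, by linarith⟩

lemma digamma_eqOn_digammaSeries : EqOn digamma digammaSeries (Ioi 0) :=
  fun _ hx => (hasDerivAt_log_Gamma hx).deriv

lemma polygamma_succ_eqOn (j : ℕ) :
    EqOn (polygamma (j + 1)) (fun y => (-1) ^ j * (j + 1).factorial * hurwitzSum (j + 2) y)
      (Ioi 0) := by
  induction j with
  | zero =>
    intro y hy
    rw [polygamma, iteratedDeriv_one,
      (digamma_eqOn_digammaSeries.eventuallyEq_of_mem (isOpen_Ioi.mem_nhds hy)).deriv_eq,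
      (hasDerivAt_digammaSeries hy).deriv]
    simp
  | succ j ih =>
    intro y hy
    rw [show polygamma (j + 2) = deriv (polygamma (j + 1)) from iteratedDeriv_succ,
      (ih.eventuallyEq_of_mem (isOpen_Ioi.mem_nhds hy)).deriv_eq,
      ((hasDerivAt_hurwitzSum (by omega) hy).const_mul _).deriv, Nat.factorial_succ (j + 1)]
    push_cast
    ring

lemma hasDerivAt_polygamma (j : ℕ) {x : ℝ} (hx : 0 < x) :
    HasDerivAt (polygamma j) (polygamma (j + 1) x) x := by
  have hnhds : Ioi 0 ∈ 𝓝 x := isOpen_Ioi.mem_nhds hx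
  have hd : DifferentiableAt ℝ (polygamma j) x := by
    cases j with
    | zero =>
      exact (hasDerivAt_digammaSeries hx).differentiableAt.congr_of_eventuallyEq
        (digamma_eqOn_digammaSeries.eventuallyEq_of_mem hnhds)
    | succ j =>
      exact ((hasDerivAt_hurwitzSum (by omega) hx).const_mul _).differentiableAt
        |>.congr_of_eventuallyEq ((polygamma_succ_eqOn j).eventuallyEq_of_mem hnhds)
  rw [show polygamma (j + 1) = deriv (polygamma j) from iteratedDeriv_succ]
  exact hd.hasDerivAt

lemma natCast_mul_inv_pow_succ_le {a : ℝ} (ha : 0 < a) (p : ℕ) :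
    p * ((a + 1) ^ (p + 1))⁻¹ ≤ (a ^ p)⁻¹ - ((a + 1) ^ p)⁻¹ := by
  have hbern : p * a ^ p ≤ a * ((a + 1) ^ p - a ^ p) := by
    have h := one_add_mul_le_pow (by linarith [inv_pos.2 ha] : (-2 : ℝ) ≤ a⁻¹) p
    have h' : a ^ p * (1 + p * a⁻¹) ≤ (a + 1) ^ p := by
      calc a ^ p * (1 + p * a⁻¹) ≤ a ^ p * (1 + a⁻¹) ^ p := by gcongr
        _ = (a + 1) ^ p := by rw [← mul_pow]; congr 1; field_simp
    have : a ^ p * (1 + p * a⁻¹) * a = a ^ p * a + p * a ^ p := by field_simp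
    nlinarith
  rw [inv_sub_inv (by positivity) (by positivity), ← div_eq_mul_inv,
    div_le_div_iff₀ (by positivity) (by positivity), pow_succ (a + 1) p]
  have hd : 0 ≤ (a + 1) ^ p - a ^ p := sub_nonneg.2 (pow_le_pow_left₀ ha.le (by linarith) p)
  nlinarith [mul_le_mul_of_nonneg_right hbern (by positivity : (0 : ℝ) ≤ (a + 1) ^ p),
    mul_nonneg hd (by positivity : (0 : ℝ) ≤ (a + 1) ^ p)]

lemma pow_mul_pow_add_pow_mul_pow_le {a b : ℝ} (ha : 0 ≤ a) (hab : a ≤ b) (i j : ℕ) :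
    a ^ i * b ^ j + a ^ j * b ^ i ≤ a ^ (i + j) + b ^ (i + j) := by
  have := mul_nonneg (sub_nonneg.2 (pow_le_pow_left₀ ha hab i))
    (sub_nonneg.2 (pow_le_pow_left₀ ha hab j))
  rw [pow_add, pow_add]
  nlinarith

lemma two_mul_mul_mul_pow_sub_pow_le {a b : ℝ} (ha : 0 ≤ a) (hab : a ≤ b) (p : ℕ) :
    2 * a * b * (b ^ p - a ^ p) ≤ p * (b - a) * (a ^ (p + 1) + b ^ (p + 1)) := by
  -- pair the `i`-th and `(p - 1 - i)`-th terms of the geometric sum for `b ^ p - a ^ p`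
  set g : ℕ → ℝ := fun i => a ^ (p - i) * b ^ (i + 1)
  have hgeom : a * b * (b ^ p - a ^ p) = (b - a) * ∑ i ∈ Finset.range p, g i := by
    rw [← geom_sum₂_mul, Finset.mul_sum, Finset.sum_mul, Finset.mul_sum]
    refine Finset.sum_congr rfl fun i hi => ?_
    rw [Finset.mem_range] at hi
    simp only [g, show p - i = p - 1 - i + 1 by omega]
    ring
  have hpair : ∀ i ∈ Finset.range p, g i + g (p - 1 - i) ≤ a ^ (p + 1) + b ^ (p + 1) := by
    intro i hi
    rw [Finset.mem_range] at hi
    have := pow_mul_pow_add_pow_mul_pow_le ha hab (p - i) (i + 1)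
    simp only [g, show p - (p - 1 - i) = i + 1 by omega, show p - 1 - i + 1 = p - i by omega,
      show p - i + (i + 1) = p + 1 by omega] at this ⊢
    linarith
  have hsum := Finset.sum_le_sum hpair
  rw [Finset.sum_add_distrib, Finset.sum_range_reflect g p, Finset.sum_const,
    Finset.card_range, nsmul_eq_mul] at hsum
  nlinarith [mul_le_mul_of_nonneg_left hsum (sub_nonneg.2 hab)]

lemma two_mul_inv_pow_sub_inv_pow_le {a : ℝ} (ha : 0 < a) (p : ℕ) :
    2 * ((a ^ p)⁻¹ - ((a + 1) ^ p)⁻¹) ≤ p * ((a ^ (p + 1))⁻¹ + ((a + 1) ^ (p + 1))⁻¹) := by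
  have h := two_mul_mul_mul_pow_sub_pow_le ha.le (by linarith : a ≤ a + 1) p
  rw [add_sub_cancel_left, mul_one, pow_succ a p, pow_succ (a + 1) p] at h
  rw [inv_sub_inv (by positivity) (by positivity), inv_add_inv (by positivity) (by positivity),
    mul_div_assoc', mul_div_assoc', div_le_div_iff₀ (by positivity) (by positivity),
    pow_succ a p, pow_succ (a + 1) p]
  nlinarith [mul_le_mul_of_nonneg_right h (by positivity : (0 : ℝ) ≤ a ^ p * (a + 1) ^ p)]

lemma hasSum_sub_succ_of_antitone {h : ℕ → ℝ} (hh : Antitone h) (h0 : Tendsto h atTop (𝓝 0)) :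
    HasSum (fun k => h k - h (k + 1)) (h 0) := by
  refine (hasSum_iff_tendsto_nat_of_nonneg (fun k => sub_nonneg.2 (hh k.le_succ)) _).2 ?_
  simpa only [Finset.sum_range_sub', sub_zero] using h0.const_sub (h 0)

lemma antitone_inv_add_pow {y : ℝ} (hy : 0 < y) (p : ℕ) :
    Antitone fun k : ℕ => ((y + k) ^ p)⁻¹ :=
  antitone_nat_of_succ_le fun k => by
    have : 0 < y + k := by positivity
    gcongr
    linarith

lemma tendsto_inv_add_pow {y : ℝ} {p : ℕ} (hp : p ≠ 0) :
    Tendsto (fun k : ℕ => ((y + k) ^ p)⁻¹) atTop (𝓝 0) :=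
  ((tendsto_pow_atTop hp).comp
    (tendsto_atTop_add_const_left _ y tendsto_natCast_atTop_atTop)).inv_tendsto_atTop

lemma hasSum_inv_add_pow_sub_succ {y : ℝ} (hy : 0 < y) {p : ℕ} (hp : p ≠ 0) :
    HasSum (fun k : ℕ => ((y + k) ^ p)⁻¹ - ((y + (k + 1 : ℕ)) ^ p)⁻¹) (y ^ p)⁻¹ := by
  simpa using hasSum_sub_succ_of_antitone (antitone_inv_add_pow hy p) (tendsto_inv_add_pow hp)

lemma natCast_mul_hurwitzSum_sub_le {p : ℕ} (hp : 1 ≤ p) {y : ℝ} (hy : 0 < y) :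
    p * (hurwitzSum (p + 1) y - (y ^ (p + 1))⁻¹) ≤ (y ^ p)⁻¹ := by
  have hs := summable_inv_add_pow hy (by omega : 2 ≤ p + 1)
  have htail : HasSum (fun k : ℕ => p * ((y + (k + 1 : ℕ)) ^ (p + 1))⁻¹)
      (p * (hurwitzSum (p + 1) y - (y ^ (p + 1))⁻¹)) := by
    refine HasSum.mul_left _ ?_
    simpa [hurwitzSum, hs.tsum_eq_zero_add] using ((summable_nat_add_iff 1).2 hs).hasSum
  refine hasSum_le (fun k => ?_) htail (hasSum_inv_add_pow_sub_succ hy (by omega))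
  simpa [add_assoc] using natCast_mul_inv_pow_succ_le (by positivity : 0 < y + k) p

lemma two_mul_inv_pow_le_natCast_mul_hurwitzSum {p : ℕ} (hp : 1 ≤ p) {y : ℝ} (hy : 0 < y) :
    2 * (y ^ p)⁻¹ ≤ p * (2 * hurwitzSum (p + 1) y - (y ^ (p + 1))⁻¹) := by
  have hs := summable_inv_add_pow hy (by omega : 2 ≤ p + 1)
  have hpairs : HasSum
      (fun k : ℕ => p * (((y + k) ^ (p + 1))⁻¹ + ((y + (k + 1 : ℕ)) ^ (p + 1))⁻¹))
      (p * (2 * hurwitzSum (p + 1) y - (y ^ (p + 1))⁻¹)) := by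
    have hsplit : 2 * hurwitzSum (p + 1) y - (y ^ (p + 1))⁻¹
        = hurwitzSum (p + 1) y + ∑' k : ℕ, ((y + (k + 1 : ℕ)) ^ (p + 1))⁻¹ := by
      rw [hurwitzSum, hs.tsum_eq_zero_add]
      simp only [CharP.cast_eq_zero, add_zero]
      ring
    rw [hsplit]
    exact (hs.hasSum.add ((summable_nat_add_iff 1).2 hs).hasSum).mul_left _
  refine hasSum_le (fun k => ?_) ((hasSum_inv_add_pow_sub_succ hy (by omega)).mul_left 2) hpairs
  simpa [add_assoc] using two_mul_inv_pow_sub_inv_pow_le (by positivity : 0 < y + k) p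

lemma hurwitzSum_le_mul_hurwitzSum_succ {q : ℕ} (hq : 2 ≤ q) {y : ℝ} (hy : 0 < y) :
    hurwitzSum q y ≤ q * y * hurwitzSum (q + 1) y := by
  obtain ⟨p, rfl⟩ : ∃ p, q = p + 1 := ⟨q - 1, by omega⟩
  have hp : 1 ≤ p := by omega
  have hupper := natCast_mul_hurwitzSum_sub_le hp hy
  have hlower := two_mul_inv_pow_le_natCast_mul_hurwitzSum (by omega : 1 ≤ p + 1) hy
  set A := (y ^ p)⁻¹
  set B := (y ^ (p + 1))⁻¹
  have hA : 0 ≤ A := by positivity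
  have hB : 0 ≤ B := by positivity
  have hlower' : 2 * A ≤ (p + 1) * (2 * y * hurwitzSum (p + 2) y - B) := by
    have hyB : y * B = A := by simp only [A, B]; field_simp; ring
    have hyC : y * (y ^ (p + 2))⁻¹ = B := by simp only [B]; field_simp; ring
    calc 2 * A = y * (2 * B) := by rw [← hyB]; ring
      _ ≤ y * ((p + 1 : ℕ) * (2 * hurwitzSum (p + 2) y - (y ^ (p + 2))⁻¹)) :=
        mul_le_mul_of_nonneg_left hlower hy.le
      _ = (p + 1) * (2 * y * hurwitzSum (p + 2) y - B) := by rw [← hyC]; push_cast; ring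
  have hpR : (1 : ℝ) ≤ p := by exact_mod_cast hp
  have key : (p : ℝ) * hurwitzSum (p + 1) y ≤ p * ((p + 1 : ℕ) * y * hurwitzSum (p + 2) y) :=
    calc (p : ℝ) * hurwitzSum (p + 1) y ≤ p * B + A := by linarith
      _ ≤ p * A + p * (p + 1) * B / 2 := by
        nlinarith [mul_nonneg (sub_nonneg.2 hpR) hA, mul_nonneg (sub_nonneg.2 hpR) hB]
      _ ≤ p * ((p + 1 : ℕ) * y * hurwitzSum (p + 2) y) := by
        push_cast
        nlinarith [mul_le_mul_of_nonneg_left hlower' (by positivity : (0 : ℝ) ≤ p)]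
  exact le_of_mul_le_mul_left key (by positivity)

lemma concaveOn_univ_comp_exp {f f' f'' : ℝ → ℝ} (hf : ∀ y, 0 < y → HasDerivAt f (f' y) y)
    (hf' : ∀ y, 0 < y → HasDerivAt f' (f'' y) y) (hle : ∀ y, 0 < y → f' y + y * f'' y ≤ 0) :
    ConcaveOn ℝ univ fun x => f (exp x) := by
  have hG : ∀ x, HasDerivAt (fun x => f (exp x)) (f' (exp x) * exp x) x := fun x =>
    (hf _ (exp_pos x)).comp x (hasDerivAt_exp x)
  have hG' : ∀ x, HasDerivAt (fun x => f' (exp x) * exp x)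
      (f'' (exp x) * exp x * exp x + f' (exp x) * exp x) x := fun x =>
    ((hf' _ (exp_pos x)).comp x (hasDerivAt_exp x)).mul (hasDerivAt_exp x)
  have hderiv : deriv (fun x => f (exp x)) = fun x => f' (exp x) * exp x :=
    funext fun x => (hG x).deriv
  refine concaveOn_univ_of_deriv2_nonpos (fun x => (hG x).differentiableAt)
    (hderiv ▸ fun x => (hG' x).differentiableAt) fun x => ?_
  rw [Function.iterate_succ_apply, Function.iterate_one, hderiv, (hG' x).deriv]
  nlinarith [mul_le_mul_of_nonneg_left (hle _ (exp_pos x)) (exp_pos x).le]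

lemma polygamma_succ_add_mul_polygamma_succ_succ_nonpos {m : ℕ} (hm : Even m) {y : ℝ}
    (hy : 0 < y) : polygamma (m + 1) y + y * polygamma (m + 2) y ≤ 0 := by
  rw [polygamma_succ_eqOn m hy, polygamma_succ_eqOn (m + 1) hy]
  simp only [pow_succ, hm.neg_one_pow, Nat.factorial_succ (m + 1)]
  have h : hurwitzSum (m + 2) y ≤ (m + 2 : ℕ) * y * hurwitzSum (m + 1 + 2) y :=
    hurwitzSum_le_mul_hurwitzSum_succ (by omega) hy
  push_cast at h ⊢
  nlinarith [mul_le_mul_of_nonneg_left h (m + 1).factorial.cast_nonneg]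

theorem stmt5_general (n : ℕ) :
    ConcaveOn ℝ Set.univ (fun x : ℝ => polygamma (2 * n - 2) (Real.exp x)) :=
  concaveOn_univ_comp_exp (fun _ hy => hasDerivAt_polygamma _ hy)
    (fun _ hy => hasDerivAt_polygamma _ hy)
    fun _ hy => polygamma_succ_add_mul_polygamma_succ_succ_nonpos ⟨n - 1, by omega⟩ hy

theorem stmt5 (n : ℕ) (hn : 0 < n) :
    ConcaveOn ℝ Set.univ (fun x : ℝ => polygamma (2 * n - 2) (Real.exp x)) :=
  stmt5_general n
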